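/- arXiv:2201.01728 — 3 statements merged into one kernel-verified Lean document; each statement's English description precedes it below -/
import Mathlib

section
/- Let 0 < ε < 1, 0 < p < 1/2, and let X ~ Binomial(⌊εn⌋, p). Then for any κ ≥ 2e, P[X ≥ κnp / log(1/ε)] ≤ 2 exp(-κnp/2). -/
open Finset in
lemma binomTailSum (m a : ℕ) (p : ℝ) (hp0 : 0 ≤ p) (hp1 : p ≤ 1) :
    ∑ k ∈ Finset.Ico a (m+1), p^k * (1-p)^(m-k) * (m.choose k : ℝ)
      ≤ (m.choose a : ℝ) * p^a := by
  rcases le_or_gt a m with ham | ham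
  · rw [Finset.sum_Ico_eq_sum_range]
    have hq0 : (0:ℝ) ≤ 1 - p := by linarith
    have key : ∀ j ∈ Finset.range (m + 1 - a),
        p^(a+j) * (1-p)^(m-(a+j)) * (m.choose (a+j) : ℝ)
          ≤ (m.choose a : ℝ) * p^a * (p^j * (1-p)^((m-a)-j) * ((m-a).choose j : ℝ)) := by
      intro j hj
      rw [Finset.mem_range] at hj
      have haj : a + j ≤ m := by omega
      have hch : m.choose (a+j) ≤ m.choose a * (m-a).choose j := by
        have h := Nat.choose_mul (n := m) (Nat.le_add_right a j)
        have hp' : 0 < (a+j).choose a := Nat.choose_pos (Nat.le_add_right a j)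
        calc m.choose (a+j) ≤ m.choose (a+j) * (a+j).choose a :=
              Nat.le_mul_of_pos_right _ hp'
          _ = m.choose a * (m-a).choose ((a+j)-a) := h
          _ = m.choose a * (m-a).choose j := by rw [Nat.add_sub_cancel_left]
      have hms : m - (a+j) = (m-a) - j := by omega
      rw [hms, pow_add]
      have hchR : (m.choose (a+j) : ℝ) ≤ (m.choose a : ℝ) * ((m-a).choose j : ℝ) := by
        exact_mod_cast hch
      have hnn : (0:ℝ) ≤ p^a * p^j * (1-p)^((m-a)-j) := by positivity
      nlinarith [mul_le_mul_of_nonneg_left hchR hnn]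
    calc ∑ j ∈ Finset.range (m + 1 - a), p^(a+j) * (1-p)^(m-(a+j)) * (m.choose (a+j) : ℝ)
        ≤ ∑ j ∈ Finset.range (m + 1 - a),
            (m.choose a : ℝ) * p^a * (p^j * (1-p)^((m-a)-j) * ((m-a).choose j : ℝ)) :=
          Finset.sum_le_sum key
      _ = (m.choose a : ℝ) * p^a *
            ∑ j ∈ Finset.range ((m-a) + 1), p^j * (1-p)^((m-a)-j) * ((m-a).choose j : ℝ) := by
          rw [show m + 1 - a = (m-a) + 1 by omega, ← Finset.mul_sum]
      _ = (m.choose a : ℝ) * p^a * ((p + (1-p))^(m-a)) := by rw [add_pow]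
      _ = (m.choose a : ℝ) * p^a := by norm_num
  · have : Finset.Ico a (m+1) = ∅ := by
      apply Finset.Ico_eq_empty; omega
    rw [this, Finset.sum_empty]
    positivity

/-- Let `0 < ε < 1`, `0 < p < 1/2`, and let `X ~ Binomial(⌊εn⌋, p)`.
Then for any `κ ≥ 2e`, `P[X ≥ κnp / log(1/ε)] ≤ 2 exp(-κnp/2)`. -/
theorem stmt6 (ε p : ℝ) (hε : 0 < ε) (hε1 : ε < 1) (hp : 0 < p) (hp2 : p < 1 / 2)
    (n : ℕ) (hn : 0 < n) (κ : ℝ) (hκ : 2 * Real.exp 1 ≤ κ) :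
    ((PMF.binomial (Real.toNNReal p)
          (Real.toNNReal_le_one.mpr (by linarith)) ⌊ε * n⌋₊).toMeasure
        {k | κ * n * p / Real.log (1 / ε) ≤ ((k : ℕ) : ℝ)}).toReal
      ≤ 2 * Real.exp (-(κ * n * p) / 2) := by
  have he1 : (0:ℝ) < Real.exp 1 := Real.exp_pos 1
  have hκ0 : 0 < κ := by linarith
  set m : ℕ := ⌊ε * n⌋₊ with hm
  set L : ℝ := Real.log (1 / ε) with hLdef
  have hL : 0 < L := Real.log_pos (by rw [lt_div_iff₀ hε]; linarith)
  have hn0 : (0:ℝ) < n := by exact_mod_cast hn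
  set t : ℝ := κ * n * p / L with htdef
  have ht : 0 < t := by positivity
  set a : ℕ := ⌈t⌉₊ with ha
  have ha0 : 0 < a := Nat.ceil_pos.mpr ht
  have hta : t ≤ (a:ℝ) := Nat.le_ceil t
  have ha0' : (0:ℝ) < a := by exact_mod_cast ha0
  set μ := (PMF.binomial (Real.toNNReal p)
      (Real.toNNReal_le_one.mpr (by linarith)) m) with hμ
  set S : Finset (Fin (m+1)) := Finset.univ.filter (fun k : Fin (m+1) => a ≤ (k:ℕ))
    with hS
  have hset : {k : Fin (m+1) | t ≤ ((k:ℕ):ℝ)} = ↑S := by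
    ext k
    simp only [hS, Set.mem_setOf_eq, Finset.coe_filter, Finset.mem_univ, true_and]
    exact Nat.ceil_le.symm
  rw [hset, PMF.toMeasure_apply_finset, ENNReal.toReal_sum
    (fun k _ => μ.apply_ne_top k)]
  have hterm : ∀ k : Fin (m+1),
      (μ k).toReal = p^(k:ℕ) * (1-p)^(m-(k:ℕ)) * (m.choose (k:ℕ) : ℝ) := by
    intro k
    rw [hμ, PMF.binomial_apply]
    have hofr : ((Real.toNNReal p : NNReal) : ENNReal) = ENNReal.ofReal p := rfl
    rw [hofr]
    have h1p : (1 : ENNReal) - ENNReal.ofReal p = ENNReal.ofReal (1-p) := by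
      rw [ENNReal.ofReal_sub _ hp.le, ENNReal.ofReal_one]
    rw [h1p, ENNReal.toReal_mul, ENNReal.toReal_mul, ENNReal.toReal_pow,
      ENNReal.toReal_pow, ENNReal.toReal_ofReal hp.le,
      ENNReal.toReal_ofReal (by linarith)]
    simp [Fin.val_last]
  have hsum : ∑ k ∈ S, (μ k).toReal
      = ∑ k ∈ Finset.Ico a (m+1), p^k * (1-p)^(m-k) * (m.choose k : ℝ) := by
    rw [Finset.sum_congr rfl (fun k _ => hterm k), hS, Finset.sum_filter,
      Fin.sum_univ_eq_sum_range
        (fun j => if a ≤ j then p^j * (1-p)^(m-j) * (m.choose j : ℝ) else 0) (m+1),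
      ← Finset.sum_filter]
    congr 1
    ext j
    simp only [Finset.mem_filter, Finset.mem_range, Finset.mem_Ico]
    omega
  rw [hsum]
  have step1 : ∑ k ∈ Finset.Ico a (m+1), p^k * (1-p)^(m-k) * (m.choose k : ℝ)
      ≤ (m.choose a : ℝ) * p^a := binomTailSum m a p hp.le (by linarith)
  have step2 : (m.choose a : ℝ) * p^a ≤ 2 * Real.exp (-(κ * n * p) / 2) := by
    have hfac : (0:ℝ) < (Nat.factorial a : ℝ) := by exact_mod_cast Nat.factorial_pos a
    have h1 : (m.choose a : ℝ) ≤ (m:ℝ)^a / (Nat.factorial a : ℝ) := Nat.choose_le_pow_div a m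
    have h2 : ((a:ℝ))^a / (Nat.factorial a : ℝ) ≤ Real.exp a :=
      Real.pow_div_factorial_le_exp (a:ℝ) ha0'.le a
    set B : ℝ := (m:ℝ) * p * Real.exp 1 / a with hB
    set b : ℝ := Real.exp 1 * ε * L / κ with hb
    have hb0 : 0 < b := by positivity
    have key : (1:ℝ) / (Nat.factorial a : ℝ) ≤ Real.exp 1 ^ a / ((a:ℝ))^a := by
      rw [Real.exp_one_pow, div_le_div_iff₀ hfac (pow_pos ha0' a)]
      rw [div_le_iff₀ hfac] at h2
      linarith
    have hCB : (m.choose a : ℝ) * p^a ≤ B^a := by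
      have e1 : (m.choose a : ℝ) * p^a ≤ ((m:ℝ)^a * p^a) * ((1:ℝ) / (Nat.factorial a : ℝ)) := by
        have := mul_le_mul_of_nonneg_right h1 (pow_nonneg hp.le a)
        calc (m.choose a : ℝ) * p^a ≤ (m:ℝ)^a / (Nat.factorial a : ℝ) * p^a := this
          _ = ((m:ℝ)^a * p^a) * ((1:ℝ) / (Nat.factorial a : ℝ)) := by ring
      have e2 : ((m:ℝ)^a * p^a) * ((1:ℝ) / (Nat.factorial a : ℝ))
          ≤ ((m:ℝ)^a * p^a) * (Real.exp 1 ^ a / ((a:ℝ))^a) :=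
        mul_le_mul_of_nonneg_left key (by positivity)
      have e3 : ((m:ℝ)^a * p^a) * (Real.exp 1 ^ a / ((a:ℝ))^a) = B^a := by
        rw [hB, div_pow, mul_pow, mul_pow]
        ring
      linarith
    have hmn : (m:ℝ) ≤ ε * n := Nat.floor_le (by positivity)
    have hBb : B ≤ b := by
      have hd : (m:ℝ) * p * Real.exp 1 / (a:ℝ) ≤ (Real.exp 1 * ε * n * p) / t := by
        apply div_le_div₀ (by positivity)
          (by nlinarith [mul_le_mul_of_nonneg_right hmn (mul_pos hp he1).le]) ht hta
      have heq : (Real.exp 1 * ε * n * p) / t = b := by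
        rw [hb, htdef]
        field_simp
      rw [hB, ← heq]
      exact hd
    have hBa : B^a ≤ b^a := pow_le_pow_left₀ (by positivity) hBb a
    have hlogε : Real.log ε = -L := by rw [hLdef, one_div, Real.log_inv]; ring
    have hlogκ : Real.log 2 + 1 ≤ Real.log κ := by
      have h := Real.log_le_log (by positivity) hκ
      rwa [Real.log_mul two_ne_zero (Real.exp_ne_zero 1), Real.log_exp] at h
    have hlogL : Real.log L ≤ L/2 + Real.log 2 := by
      have h1' := Real.log_le_sub_one_of_pos (show (0:ℝ) < L/2 by linarith)
      have h2' : Real.log (L/2) = Real.log L - Real.log 2 :=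
        Real.log_div (ne_of_gt hL) two_ne_zero
      linarith
    have hlogb : Real.log b ≤ -L/2 := by
      rw [hb, Real.log_div (by positivity) (ne_of_gt hκ0),
        Real.log_mul (by positivity) (ne_of_gt hL),
        Real.log_mul (Real.exp_ne_zero 1) (ne_of_gt hε), Real.log_exp]
      linarith
    have hba : b^a ≤ Real.exp (-(κ * n * p) / 2) := by
      have e4 : b^a = Real.exp ((a:ℝ) * Real.log b) := by
        rw [Real.exp_nat_mul, Real.exp_log hb0]
      rw [e4, Real.exp_le_exp]
      have e5 : (a:ℝ) * Real.log b ≤ (a:ℝ) * (-L/2) :=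
        mul_le_mul_of_nonneg_left hlogb (by positivity)
      have e6 : (a:ℝ) * (-L/2) ≤ t * (-L/2) :=
        mul_le_mul_of_nonpos_right hta (by linarith)
      have e7 : t * (-L/2) = -(κ * n * p) / 2 := by
        rw [htdef]
        field_simp
      linarith
    have hexp : 0 < Real.exp (-(κ * n * p) / 2) := Real.exp_pos _
    linarith
  linarith
end

section
/- Let m ≥ 1 and h ≥ 0. The number of triples of vectors (u₁, u₂, u₃) ∈ (𝔽₂^m)³ with u₃ = u₁ ⊕ u₂ that differ from a given such triple (v₁, v₂, v₃) in exactly F columns is at most binom(m, F)·binom(F+2, 2)·2^(3F), which is at most 2^10·(4m)^F. -/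
lemma two_mul_choose_two (k : ℕ) : 2 * (k+2).choose 2 = (k+2)*(k+1) := by
  have hdvd : 2 ∣ (k+2)*(k+2-1) := by
    have he : Even ((k+1)*(k+1+1)) := Nat.even_mul_succ_self (k+1)
    rw [show k+2-1 = k+1 from rfl, Nat.mul_comm]
    exact he.two_dvd
  rw [Nat.choose_two_right, Nat.mul_div_cancel' hdvd]
  congr 1

lemma key (F : ℕ) : (F+2).choose 2 * 2^F ≤ 2^10 * F.factorial := by
  induction F with
  | zero => decide
  | succ n ih =>
    rcases lt_or_ge n 3 with h | h
    · interval_cases n <;> decide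
    · have h2 := two_mul_choose_two (n+1)
      have h3 := two_mul_choose_two n
      have hfac : (n+1).factorial = (n+1) * n.factorial := rfl
      have hp : 2^(n+1) = 2 * 2^n := by ring
      refine Nat.le_of_mul_le_mul_left ?_ (show 0 < 2 by norm_num)
      calc 2 * ((n+1+2).choose 2 * 2^(n+1))
          = ((n+3)*(n+2)) * 2 * 2^n := by
            have h2' : 2 * (n+3).choose 2 = (n+3)*(n+2) := h2
            rw [hp]
            calc 2 * ((n+1+2).choose 2 * (2*2^n))
                = (2*(n+3).choose 2) * 2 * 2^n := by ring_nf
              _ = (n+3)*(n+2)*2*2^n := by rw [h2']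
        _ ≤ (n+1) * ((n+2)*(n+1)) * 2^n := by
            have : (n+3)*(n+2)*2 ≤ (n+1)*((n+2)*(n+1)) := by nlinarith
            exact Nat.mul_le_mul_right _ (by nlinarith)
        _ = (n+1) * 2 * ((n+2).choose 2 * 2^n) := by rw [← h3]; ring
        _ ≤ (n+1) * 2 * (2^10 * n.factorial) := by gcongr
        _ = 2 * (2^10 * (n+1).factorial) := by rw [hfac]; ring

lemma orderIso_coe_congr {α : Type*} [LinearOrder α] {F : ℕ} (S S' : Finset α)
    (h : S.card = F) (h' : S'.card = F) (e : S = S') (j : Fin F) :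
    ((S.orderIsoOfFin h j : α)) = ((S'.orderIsoOfFin h' j : α)) := by
  subst e; rfl

/-- Let `m ≥ 1`. The number of triples `(u₁, u₂, u₃) ∈ (𝔽₂^m)³` with
`u₃ = u₁ ⊕ u₂` that differ from a given such triple `(v₁, v₂, v₃)` in exactly `F` columns
is at most `binom(m, F)·binom(F+2, 2)·2^(3F)`, which is at most `2^10·(4m)^F`. -/
theorem stmt13 (m : ℕ) (hm : 1 ≤ m) (F : ℕ) (v : Fin 3 → Fin m → ZMod 2)
    (hv : v 2 = v 0 + v 1) :
    Nat.card {u : Fin 3 → Fin m → ZMod 2 //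
        u 2 = u 0 + u 1 ∧
        (Finset.univ.filter
          (fun c : Fin m => (fun i : Fin 3 => u i c) ≠ (fun i : Fin 3 => v i c))).card = F}
      ≤ m.choose F * (F + 2).choose 2 * 2 ^ (3 * F) ∧
      m.choose F * (F + 2).choose 2 * 2 ^ (3 * F) ≤ 2 ^ 10 * (4 * m) ^ F := by
  constructor
  · -- counting part
    set S : (Fin 3 → Fin m → ZMod 2) → Finset (Fin m) :=
      fun u => Finset.univ.filter
          (fun c : Fin m => (fun i : Fin 3 => u i c) ≠ (fun i : Fin 3 => v i c)) with hSdef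
    have hinj : Function.Injective
        (fun u : {u : Fin 3 → Fin m → ZMod 2 //
          u 2 = u 0 + u 1 ∧ (S u).card = F} =>
          ((⟨S u.1, u.2.2⟩ : {T : Finset (Fin m) // T.card = F}),
            fun j : Fin F =>
              ((u.1 0 ((S u.1).orderIsoOfFin u.2.2 j), u.1 1 ((S u.1).orderIsoOfFin u.2.2 j))
                : ZMod 2 × ZMod 2))) := by
      rintro ⟨u, hu2, huF⟩ ⟨w, hw2, hwF⟩ h
      simp only [Prod.mk.injEq, Subtype.mk.injEq] at h
      obtain ⟨hSS, hg⟩ := h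
      have key01 : ∀ c : Fin m, u 0 c = w 0 c ∧ u 1 c = w 1 c := by
        intro c
        by_cases hc : c ∈ S u
        · have hc' : c ∈ S w := hSS ▸ hc
          set j : Fin F := ((S u).orderIsoOfFin huF).symm ⟨c, hc⟩ with hj
          have e1 : ((S u).orderIsoOfFin huF j : Fin m) = c := by
            rw [hj, OrderIso.apply_symm_apply]
          have e2 : ((S w).orderIsoOfFin hwF j : Fin m) = c := by
            rw [← orderIso_coe_congr (S u) (S w) huF hwF hSS j, e1]
          have := congrFun hg j
          simp only [Prod.mk.injEq] at this
          rw [e1, e2] at this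
          exact this
        · have hc' : c ∉ S w := hSS ▸ hc
          simp only [hSdef, Finset.mem_filter, Finset.mem_univ, true_and, not_not] at hc hc'
          constructor
          · rw [congrFun hc 0, congrFun hc' 0]
          · rw [congrFun hc 1, congrFun hc' 1]
      have h0 : u 0 = w 0 := funext fun c => (key01 c).1
      have h1 : u 1 = w 1 := funext fun c => (key01 c).2
      have h2 : u 2 = w 2 := by rw [hu2, hw2, h0, h1]
      apply Subtype.ext
      funext i
      fin_cases i <;> assumption
    have hle := Nat.card_le_card_of_injective _ hinj
    have hcard : Nat.card ({T : Finset (Fin m) // T.card = F} × (Fin F → ZMod 2 × ZMod 2))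
        = m.choose F * 4 ^ F := by
      rw [Nat.card_eq_fintype_card, Fintype.card_prod, Fintype.card_finset_len,
        Fintype.card_fun]
      simp
    rw [hcard] at hle
    refine hle.trans ?_
    have h1 : (4:ℕ)^F ≤ 2^(3*F) := by
      rw [pow_mul]
      exact Nat.pow_le_pow_left (by norm_num) F
    have h2 : 1 ≤ (F+2).choose 2 := by
      exact Nat.choose_pos (Nat.le_add_left 2 F)
    have h3 : (4:ℕ)^F ≤ (F+2).choose 2 * 2^(3*F) := by
      exact h1.trans (Nat.le_mul_of_pos_left _ h2)
    rw [Nat.mul_assoc]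
    exact Nat.mul_le_mul le_rfl h3
  · -- arithmetic part
    refine Nat.le_of_mul_le_mul_right ?_ F.factorial_pos
    have hd : m.choose F * F.factorial ≤ m ^ F := by
      rw [mul_comm, ← Nat.descFactorial_eq_factorial_mul_choose]
      exact Nat.descFactorial_le_pow m F
    have hk := key F
    calc m.choose F * (F+2).choose 2 * 2^(3*F) * F.factorial
        = (m.choose F * F.factorial) * ((F+2).choose 2 * 2^F) * 4^F := by
          rw [show 3*F = F + 2*F by ring, pow_add, pow_mul]; ring_nf
      _ ≤ m^F * (2^10 * F.factorial) * 4^F :=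
          Nat.mul_le_mul_right _ (Nat.mul_le_mul hd hk)
      _ = 2^10 * (4*m)^F * F.factorial := by rw [mul_pow]; ring
end

section
/- Let α(n) = Θ(log n / n) and r = r(n) = n / (log n)³. Consider a random graph on two disjoint vertex sets G₁, G₂ of size n/6 each, where edges within each Gᵢ appear independently with probability α and edges between G₁ and G₂ with probability β ≤ α. Then with probability 1 - o(1) as n → ∞, there exist subsets T₁ ⊆ G₁ and T₂ ⊆ G₂ with |T₁|, |T₂| ≥ r such that the induced subgraph on T₁ ∪ T₂ contains no edges. -/
open MeasureTheory Filter Topology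

lemma stmt17_core {Ω : Type*} [MeasurableSpace Ω] (μ : Measure Ω) [IsProbabilityMeasure μ]
    {n : ℕ} {c₂ : ℝ} (hc₂ : 0 < c₂) {α β : ℝ} (hβ0 : 0 ≤ β) (hβα : β ≤ α)
    (hαub : α ≤ c₂ * Real.log n / n)
    (G₁ G₂ : Finset (Fin n)) (hcard₁ : G₁.card = n / 6) (hcard₂ : G₂.card = n / 6)
    (A : Sym2 (Fin n) → Ω → Bool) (hA : ∀ e, Measurable (A e))
    (hw₁ : ∀ f ∈ G₁, ∀ g ∈ G₁, f ≠ g → μ {ω | A s(f, g) ω = true} = ENNReal.ofReal α)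
    (hw₂ : ∀ f ∈ G₂, ∀ g ∈ G₂, f ≠ g → μ {ω | A s(f, g) ω = true} = ENNReal.ofReal α)
    (hac : ∀ f ∈ G₁, ∀ g ∈ G₂, μ {ω | A s(f, g) ω = true} = ENNReal.ofReal β)
    (hlog : 4 ≤ Real.log n) (hrr : 1 ≤ (n : ℝ) / (Real.log n) ^ 3) (hn : 7 ≤ n) :
    1 - 32 * c₂ / (Real.log n) ^ 2 ≤
      (μ {ω | ∃ T₁ ⊆ G₁, ∃ T₂ ⊆ G₂,
        (n : ℝ) / (Real.log n) ^ 3 ≤ T₁.card ∧ (n : ℝ) / (Real.log n) ^ 3 ≤ T₂.card ∧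
        ∀ v ∈ T₁ ∪ T₂, ∀ w ∈ T₁ ∪ T₂, v ≠ w → A s(v, w) ω = false}).toReal := by
  classical
  set r : ℝ := (n : ℝ) / (Real.log n) ^ 3 with hrdef
  have hlogpos : (0:ℝ) < Real.log n := lt_of_lt_of_le (by norm_num) hlog
  have hnpos : (0:ℝ) < n := by positivity
  have hrpos : (0:ℝ) < r := lt_of_lt_of_le one_pos hrr
  set k : ℕ := ⌈3 * r⌉₊ with hkdef
  have hk3 : 3 * r ≤ (k : ℝ) := Nat.le_ceil _
  have hk4 : (k : ℝ) ≤ 4 * r := by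
    have h1 : (k : ℝ) < 3 * r + 1 := Nat.ceil_lt_add_one (by positivity)
    nlinarith
  -- k ≤ n / 6
  have hkcard : k ≤ n / 6 := by
    rw [hkdef, Nat.ceil_le]
    have h64 : (64:ℝ) ≤ (Real.log n) ^ 3 := by
      have := pow_le_pow_left₀ (by norm_num : (0:ℝ) ≤ 4) hlog 3
      norm_num at this
      linarith
    have h1 : 3 * r ≤ 3 * ((n:ℝ) / 64) := by
      have : (n:ℝ) / (Real.log n)^3 ≤ (n:ℝ) / 64 :=
        div_le_div_of_nonneg_left (le_of_lt hnpos) (by norm_num) h64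
      nlinarith
    have h2 : ((n:ℝ) - 5) / 6 ≤ ((n / 6 : ℕ) : ℝ) := by
      have := Nat.div_add_mod n 6
      have hm : n % 6 ≤ 5 := Nat.le_of_lt_succ (Nat.mod_lt n (by norm_num))
      have : n ≤ 6 * (n / 6) + 5 := by omega
      have := (Nat.cast_le (α := ℝ)).mpr this
      push_cast at this
      linarith
    have h7 : (7:ℝ) ≤ n := by exact_mod_cast hn
    nlinarith
  obtain ⟨S₁, hS₁G, hS₁card⟩ := Finset.exists_subset_card_eq (hcard₁ ▸ hkcard)
  obtain ⟨S₂, hS₂G, hS₂card⟩ := Finset.exists_subset_card_eq (hcard₂ ▸ hkcard)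
  set U : Finset (Fin n) := S₁ ∪ S₂ with hUdef
  set P : Finset (Fin n × Fin n) := (U ×ˢ U).filter (fun p => p.1 ≠ p.2) with hPdef
  have hUsub : ∀ v ∈ U, v ∈ G₁ ∨ v ∈ G₂ := by
    intro v hv
    rcases Finset.mem_union.mp hv with h | h
    · exact Or.inl (hS₁G h)
    · exact Or.inr (hS₂G h)
  set f : Ω → ENNReal := fun ω => ∑ p ∈ P, if A s(p.1, p.2) ω = true then 1 else 0
    with hfdef
  have hsetmeas : ∀ e, MeasurableSet {ω | A e ω = true} := fun e =>
    hA e (measurableSet_singleton true)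
  have hfmeas : Measurable f := by
    apply Finset.measurable_sum
    intro p _
    exact Measurable.ite (hsetmeas _) measurable_const measurable_const
  -- the integral
  have hint : ∫⁻ ω, f ω ∂μ = ∑ p ∈ P, μ {ω | A s(p.1, p.2) ω = true} := by
    rw [hfdef, lintegral_finset_sum _
      (fun p _ => Measurable.ite (hsetmeas _) measurable_const measurable_const)]
    refine Finset.sum_congr rfl fun p _ => ?_
    have : (fun ω => if A s(p.1, p.2) ω = true then (1:ENNReal) else 0)
        = Set.indicator {ω | A s(p.1, p.2) ω = true} 1 := by
      ext ω; simp [Set.indicator_apply]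
    rw [this, lintegral_indicator_one (hsetmeas _)]
  have hpair : ∀ p ∈ P, μ {ω | A s(p.1, p.2) ω = true} ≤ ENNReal.ofReal α := by
    intro p hp
    rw [hPdef, Finset.mem_filter, Finset.mem_product] at hp
    obtain ⟨⟨h1, h2⟩, hne⟩ := hp
    rcases hUsub _ h1 with hg1 | hg1 <;> rcases hUsub _ h2 with hg2 | hg2
    · exact le_of_eq (hw₁ _ hg1 _ hg2 hne)
    · exact (hac _ hg1 _ hg2).le.trans (ENNReal.ofReal_le_ofReal hβα)
    · have hs : s(p.1, p.2) = s(p.2, p.1) := Sym2.eq_swap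
      rw [hs]
      exact (hac _ hg2 _ hg1).le.trans (ENNReal.ofReal_le_ofReal hβα)
    · exact le_of_eq (hw₂ _ hg1 _ hg2 hne)
  have hPcard : P.card ≤ (2 * k) ^ 2 := by
    have hU : U.card ≤ 2 * k := by
      calc U.card ≤ S₁.card + S₂.card := Finset.card_union_le _ _
        _ = 2 * k := by rw [hS₁card, hS₂card]; ring
    calc P.card ≤ (U ×ˢ U).card := Finset.card_filter_le _ _
      _ = U.card * U.card := Finset.card_product _ _
      _ ≤ (2 * k) * (2 * k) := Nat.mul_le_mul hU hU
      _ = (2 * k) ^ 2 := (sq _).symm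
  have hαpos : (0:ℝ) ≤ α := le_trans hβ0 hβα
  have hintle : ∫⁻ ω, f ω ∂μ ≤ ((2 * k)^2 : ℕ) * ENNReal.ofReal α := by
    rw [hint]
    calc ∑ p ∈ P, μ {ω | A s(p.1, p.2) ω = true}
        ≤ ∑ _p ∈ P, ENNReal.ofReal α := Finset.sum_le_sum hpair
      _ = (P.card : ENNReal) * ENNReal.ofReal α := by
          rw [Finset.sum_const, nsmul_eq_mul]
      _ ≤ ((2 * k)^2 : ℕ) * ENNReal.ofReal α := by
          gcongr <;> exact_mod_cast hPcard
  -- Markov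
  set bad : Set Ω := {ω | ENNReal.ofReal (2 * r) ≤ f ω} with hbaddef
  have hbadmeas : MeasurableSet bad := measurableSet_le measurable_const hfmeas
  have hmarkov : μ bad ≤ (∫⁻ ω, f ω ∂μ) / ENNReal.ofReal (2 * r) :=
    meas_ge_le_lintegral_div hfmeas.aemeasurable
      (by simp [ENNReal.ofReal_eq_zero]; linarith) ENNReal.ofReal_ne_top
  have hbadbound : (μ bad).toReal ≤ 32 * c₂ / (Real.log n) ^ 2 := by
    have h2r : (0:ℝ) < 2 * r := by linarith
    have hB0 : μ bad ≤ ENNReal.ofReal ((((2*k)^2 : ℕ) : ℝ) * α) / ENNReal.ofReal (2 * r) := by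
      refine hmarkov.trans ?_
      gcongr
      refine hintle.trans (le_of_eq ?_)
      rw [ENNReal.ofReal_mul (by positivity), ENNReal.ofReal_natCast]
    have hB : μ bad ≤ ENNReal.ofReal ((((2*k)^2 : ℕ) : ℝ) * α / (2 * r)) := by
      rwa [ENNReal.ofReal_div_of_pos h2r]
    refine le_trans (ENNReal.toReal_le_of_le_ofReal ?_ hB) ?_
    · positivity
    · have hk2 : (((2*k)^2 : ℕ) : ℝ) ≤ 64 * r ^ 2 := by
        push_cast
        nlinarith
      have hub' : (0:ℝ) ≤ c₂ * Real.log n / n := by positivity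
      have hstep : (((2*k)^2 : ℕ) : ℝ) * α / (2 * r) ≤ 64 * r^2 * (c₂ * Real.log n / n) / (2 * r) := by
        gcongr <;> first | positivity | exact hk2 | exact hαub
      refine hstep.trans (le_of_eq ?_)
      rw [hrdef]
      field_simp
      ring
  -- good event implies existence
  have hsub : badᶜ ⊆ {ω | ∃ T₁ ⊆ G₁, ∃ T₂ ⊆ G₂,
      r ≤ T₁.card ∧ r ≤ T₂.card ∧
      ∀ v ∈ T₁ ∪ T₂, ∀ w ∈ T₁ ∪ T₂, v ≠ w → A s(v, w) ω = false} := by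
    intro ω hω
    have hflt : f ω < ENNReal.ofReal (2 * r) := lt_of_not_ge hω
    set R : Finset (Fin n) := U.filter (fun v => ∃ w ∈ U, w ≠ v ∧ A s(v, w) ω = true)
      with hRdef
    -- card bound on R
    have hfval : f ω = ((P.filter (fun p => A s(p.1, p.2) ω = true)).card : ENNReal) := by
      rw [hfdef]
      exact Finset.sum_boole _ _
    have hRcard : R.card ≤ (P.filter (fun p => A s(p.1, p.2) ω = true)).card := by
      set φ : Fin n → Fin n × Fin n := fun v =>
        if h : ∃ w ∈ U, w ≠ v ∧ A s(v, w) ω = true then (v, h.choose) else (v, v) with hφ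
      apply Finset.card_le_card_of_injOn φ
      · intro v hv
        rw [hRdef, Finset.mem_coe, Finset.mem_filter] at hv
        obtain ⟨hvU, hex⟩ := hv
        rw [hφ]
        simp only [dif_pos hex]
        obtain ⟨hwU, hwne, hedge⟩ := hex.choose_spec
        rw [Finset.mem_coe, Finset.mem_filter, hPdef, Finset.mem_filter, Finset.mem_product]
        exact ⟨⟨⟨hvU, hwU⟩, fun h => hwne (by simpa using h.symm)⟩, hedge⟩
      · intro a _ b _ hab
        have : (φ a).1 = (φ b).1 := by rw [hab]
        simpa [hφ, apply_dite Prod.fst] using this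
    have hRlt : (R.card : ℝ) < 2 * r := by
      have h1 : (R.card : ENNReal) < ENNReal.ofReal (2 * r) := by
        refine lt_of_le_of_lt ?_ hflt
        rw [hfval]
        exact_mod_cast hRcard
      rw [← ENNReal.ofReal_natCast] at h1
      exact (ENNReal.ofReal_lt_ofReal_iff (by linarith)).mp h1
    refine ⟨S₁ \ R, (Finset.sdiff_subset).trans hS₁G, S₂ \ R, (Finset.sdiff_subset).trans hS₂G,
      ?_, ?_, ?_⟩
    · -- card bound for T₁
      have h1 : S₁.card ≤ (S₁ \ R).card + R.card := by
        calc S₁.card ≤ (S₁ ∪ R).card := Finset.card_le_card Finset.subset_union_left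
          _ = (S₁ \ R).card + R.card := (Finset.card_sdiff_add_card _ _).symm
      have h1' : (k : ℝ) ≤ ((S₁ \ R).card : ℝ) + R.card := by
        rw [← hS₁card]; exact_mod_cast h1
      linarith
    · have h1 : S₂.card ≤ (S₂ \ R).card + R.card := by
        calc S₂.card ≤ (S₂ ∪ R).card := Finset.card_le_card Finset.subset_union_left
          _ = (S₂ \ R).card + R.card := (Finset.card_sdiff_add_card _ _).symm
      have h1' : (k : ℝ) ≤ ((S₂ \ R).card : ℝ) + R.card := by
        rw [← hS₂card]; exact_mod_cast h1
      linarith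
    · intro v hv w hw hvw
      have hmem : ∀ x ∈ (S₁ \ R) ∪ (S₂ \ R), x ∈ U ∧ x ∉ R := by
        intro x hx
        rcases Finset.mem_union.mp hx with h | h <;> rw [Finset.mem_sdiff] at h
        · exact ⟨Finset.mem_union_left _ h.1, h.2⟩
        · exact ⟨Finset.mem_union_right _ h.1, h.2⟩
      obtain ⟨hvU, hvR⟩ := hmem v hv
      obtain ⟨hwU, _⟩ := hmem w hw
      by_contra hfalse
      have htrue : A s(v, w) ω = true := by
        cases hAval : A s(v, w) ω
        · exact absurd hAval hfalse
        · rfl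
      exact hvR (by rw [hRdef, Finset.mem_filter]; exact ⟨hvU, w, hwU, hvw.symm, htrue⟩)
  -- conclude
  have h1 : μ bad + μ badᶜ = 1 := by
    rw [measure_add_measure_compl hbadmeas, measure_univ]
  have h2 : (μ bad).toReal + (μ badᶜ).toReal = 1 := by
    rw [← ENNReal.toReal_add (measure_ne_top _ _) (measure_ne_top _ _), h1, ENNReal.toReal_one]
  have h3 : (μ badᶜ).toReal ≤ (μ {ω | ∃ T₁ ⊆ G₁, ∃ T₂ ⊆ G₂,
      r ≤ (T₁.card : ℝ) ∧ r ≤ (T₂.card : ℝ) ∧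
      ∀ v ∈ T₁ ∪ T₂, ∀ w ∈ T₁ ∪ T₂, v ≠ w → A s(v, w) ω = false}).toReal :=
    ENNReal.toReal_mono (measure_ne_top _ _) (measure_mono hsub)
  linarith
/-- Let `α(n) = Θ(log n / n)` and `r = n / (log n)³`. For a random graph on two
disjoint vertex sets `G₁, G₂` of size `n/6` each, with within-group edge probability `α` and
cross edge probability `β ≤ α`, with probability `1 - o(1)` there exist subsets `T₁ ⊆ G₁`,
`T₂ ⊆ G₂` with `|T₁|, |T₂| ≥ r` such that the induced subgraph on `T₁ ∪ T₂` is edge-free. -/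
theorem stmt17 (Ω : ℕ → Type*) [∀ n, MeasurableSpace (Ω n)]
    (μ : ∀ n, Measure (Ω n)) [∀ n, IsProbabilityMeasure (μ n)]
    (α β : ℕ → ℝ)
    (hαΘ : ∃ c₁ c₂ : ℝ, 0 < c₁ ∧ 0 < c₂ ∧ ∀ᶠ n : ℕ in atTop,
      c₁ * Real.log n / n ≤ α n ∧ α n ≤ c₂ * Real.log n / n)
    (hβ : ∀ n, 0 ≤ β n ∧ β n ≤ α n)
    (G₁ G₂ : ∀ n, Finset (Fin n))
    (hdisj : ∀ n, Disjoint (G₁ n) (G₂ n))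
    (hcard₁ : ∀ n, (G₁ n).card = n / 6) (hcard₂ : ∀ n, (G₂ n).card = n / 6)
    (A : ∀ n, Sym2 (Fin n) → Ω n → Bool)
    (hA : ∀ n e, Measurable (A n e))
    (hindep : ∀ n, ProbabilityTheory.iIndepFun (A n) (μ n))
    (hwithin₁ : ∀ n, ∀ f ∈ G₁ n, ∀ g ∈ G₁ n, f ≠ g →
      μ n {ω | A n s(f, g) ω = true} = ENNReal.ofReal (α n))
    (hwithin₂ : ∀ n, ∀ f ∈ G₂ n, ∀ g ∈ G₂ n, f ≠ g →
      μ n {ω | A n s(f, g) ω = true} = ENNReal.ofReal (α n))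
    (hacross : ∀ n, ∀ f ∈ G₁ n, ∀ g ∈ G₂ n,
      μ n {ω | A n s(f, g) ω = true} = ENNReal.ofReal (β n)) :
    Tendsto (fun n => (μ n {ω | ∃ T₁ ⊆ G₁ n, ∃ T₂ ⊆ G₂ n,
        (n : ℝ) / (Real.log n) ^ 3 ≤ T₁.card ∧ (n : ℝ) / (Real.log n) ^ 3 ≤ T₂.card ∧
        ∀ v ∈ T₁ ∪ T₂, ∀ w ∈ T₁ ∪ T₂, v ≠ w → A n s(v, w) ω = false}).toReal)
      atTop (𝓝 1) := by
  obtain ⟨c₁, c₂, hc₁, hc₂, hα⟩ := hαΘ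
  have hlogT : Tendsto (fun n : ℕ => Real.log n) atTop atTop :=
    Real.tendsto_log_atTop.comp tendsto_natCast_atTop_atTop
  have hlogev : ∀ᶠ n : ℕ in atTop, 4 ≤ Real.log n := hlogT.eventually_ge_atTop 4
  have hrrevR : ∀ᶠ x : ℝ in atTop, Real.log x ^ 3 ≤ x := by
    have h := (Real.isLittleO_pow_log_id_atTop (n := 3)).bound one_pos
    filter_upwards [h, eventually_ge_atTop (0:ℝ)] with x hx hx0
    calc Real.log x ^ 3 ≤ ‖Real.log x ^ 3‖ := le_abs_self _
      _ ≤ 1 * ‖id x‖ := hx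
      _ = x := by simp [Real.norm_eq_abs, abs_of_nonneg hx0]
  have hrrev : ∀ᶠ n : ℕ in atTop, 1 ≤ (n : ℝ) / (Real.log n) ^ 3 := by
    filter_upwards [tendsto_natCast_atTop_atTop.eventually hrrevR, hlogev] with n h1 h2
    have hlp : (0:ℝ) < Real.log n := by linarith
    exact (one_le_div (by positivity)).mpr h1
  have hlower : ∀ᶠ n : ℕ in atTop,
      1 - 32 * c₂ / (Real.log n) ^ 2 ≤ (μ n {ω | ∃ T₁ ⊆ G₁ n, ∃ T₂ ⊆ G₂ n,
        (n : ℝ) / (Real.log n) ^ 3 ≤ T₁.card ∧ (n : ℝ) / (Real.log n) ^ 3 ≤ T₂.card ∧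
        ∀ v ∈ T₁ ∪ T₂, ∀ w ∈ T₁ ∪ T₂, v ≠ w → A n s(v, w) ω = false}).toReal := by
    filter_upwards [hα, hlogev, hrrev, eventually_ge_atTop 7] with n h1 h2 h3 h4
    exact stmt17_core (μ n) hc₂ (hβ n).1 (hβ n).2 h1.2 (G₁ n) (G₂ n) (hcard₁ n) (hcard₂ n)
      (A n) (hA n) (hwithin₁ n) (hwithin₂ n) (hacross n) h2 h3 h4
  have hup : ∀ᶠ n : ℕ in atTop, (μ n {ω | ∃ T₁ ⊆ G₁ n, ∃ T₂ ⊆ G₂ n,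
        (n : ℝ) / (Real.log n) ^ 3 ≤ T₁.card ∧ (n : ℝ) / (Real.log n) ^ 3 ≤ T₂.card ∧
        ∀ v ∈ T₁ ∪ T₂, ∀ w ∈ T₁ ∪ T₂, v ≠ w → A n s(v, w) ω = false}).toReal ≤ 1 :=
    Eventually.of_forall fun n => by
      simpa using ENNReal.toReal_mono ENNReal.one_ne_top prob_le_one
  have hlim : Tendsto (fun n : ℕ => 32 * c₂ / (Real.log n) ^ 2) atTop (𝓝 0) := by
    have h2 : Tendsto (fun n : ℕ => (Real.log n) ^ 2) atTop atTop :=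
      (tendsto_pow_atTop two_ne_zero).comp hlogT
    simpa [div_eq_mul_inv] using h2.inv_tendsto_atTop.const_mul (32 * c₂)
  have hlow : Tendsto (fun n : ℕ => 1 - 32 * c₂ / (Real.log n) ^ 2) atTop (𝓝 1) := by
    simpa using tendsto_const_nhds.sub hlim
  exact tendsto_of_tendsto_of_tendsto_of_le_of_le' hlow tendsto_const_nhds hlower hup
end
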